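/- If P and Q are α-wqo quasi-orders, for an ordinal α, then the product P × Q with the componentwise order is an α-wqo. -/

import Mathlib

open Ordinal

universe u

/-! ### Basic wqo notions -/

/-- `P` is a wqo: there is no bad sequence. -/
def IsWqo (P : Type u) [Preorder P] : Prop :=
  ¬ ∃ f : ℕ → P, ∀ i j, i < j → ¬ f i ≤ f j

/-- `P` is well-founded as a quasi-order: no strictly descending ω-sequence. -/
def WFqo (P : Type u) [Preorder P] : Prop :=
  ¬ ∃ x : ℕ → P, ∀ i, x (i + 1) ≤ x i ∧ ¬ x i ≤ x (i + 1)

/-! ### Fronts, identifying finite subsets of ℕ with their increasing enumerations -/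

/-- `σ ⊑ τ`: `σ` is an initial segment of `τ`. -/
def InitSeg (σ τ : Finset ℕ) : Prop :=
  σ ⊆ τ ∧ ∀ a ∈ σ, ∀ b ∈ τ, b ≤ a → b ∈ σ

/-- `σ` is a (finite) initial segment of the set `X`. -/
def InitSegSet (σ : Finset ℕ) (X : Set ℕ) : Prop :=
  ↑σ ⊆ X ∧ ∀ a ∈ σ, ∀ b ∈ X, b ≤ a → b ∈ σ

/-- A front `(F, rk)`. -/
structure Front where
  F : Set (Finset ℕ)
  infinite : F.Infinite
  antichain : ∀ σ ∈ F, ∀ τ ∈ F, InitSeg σ τ → σ = τ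
  covers : ∀ X : Set ℕ, X.Infinite → (X ⊆ {n | ∃ σ ∈ F, n ∈ σ}) →
    ∃ σ ∈ F, InitSegSet σ X
  rk : Finset ℕ → Ordinal.{0}
  rk_strict : ∀ σ τ : Finset ℕ,
    (∃ ρ ∈ F, InitSeg σ ρ ∧ σ ≠ ρ) → (∃ ρ ∈ F, InitSeg τ ρ ∧ τ ≠ ρ) →
    InitSeg σ τ → σ ≠ τ → rk τ < rk σ

/-- The rank of the front is the rank of the empty sequence. -/
def Front.rank (Fr : Front) : Ordinal.{0} := Fr.rk ∅

/-- `⋃ F`. -/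
def Front.union (Fr : Front) : Set ℕ := {n | ∃ σ ∈ Fr.F, n ∈ σ}

/-- `σ ◁ τ`. -/
def Tri (σ τ : Finset ℕ) : Prop :=
  ∃ (hσ : σ.Nonempty) (hτ : τ.Nonempty),
    σ.min' hσ < τ.min' hτ ∧
    (InitSeg (σ.erase (σ.min' hσ)) τ ∨ InitSeg τ (σ.erase (σ.min' hσ)))

/-- `g` is a bad array on the front `Fr`. -/
def BadArray {P : Type u} [Preorder P] (Fr : Front) (g : Finset ℕ → P) : Prop :=
  ∀ σ ∈ Fr.F, ∀ τ ∈ Fr.F, Tri σ τ → ¬ g σ ≤ g τ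

/-- `P` is an `α`-wqo. -/
def IsAlphaWqo (α : Ordinal.{0}) (P : Type u) [Preorder P] : Prop :=
  WFqo P ∧ ∀ Fr : Front, Fr.rank < α → ∀ g : Finset ℕ → P, ¬ BadArray Fr g

/-! ### Transfinite sequences -/

/-- A transfinite sequence over `Q`: a function `|u| → Q` with `|u| > 0`. -/
structure TSeq (Q : Type u) where
  len : Ordinal.{0}
  pos : 0 < len
  toFun : {γ : Ordinal.{0} // γ < len} → Q

namespace TSeq

variable {Q : Type u}

/-- Embeddability `u ⪯ v`. -/
def Emb [Preorder Q] (u v : TSeq Q) : Prop :=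
  ∃ f : {γ // γ < u.len} → {γ // γ < v.len},
    (∀ a b, a.1 < b.1 → (f a).1 < (f b).1) ∧ ∀ a, u.toFun a ≤ v.toFun (f a)

/-- Weak embeddability `u ⪯* v`. -/
def WEmb [Preorder Q] (u v : TSeq Q) : Prop :=
  ∃ f : {γ // γ < u.len} → {γ // γ < v.len},
    (∀ a b, a.1 ≤ b.1 → (f a).1 ≤ (f b).1) ∧ ∀ a, u.toFun a ≤ v.toFun (f a)

/-- The subsegment `u↾[γ, δ)`. -/
noncomputable def seg (u : TSeq Q) (γ δ : Ordinal.{0}) (h1 : γ < δ) (h2 : δ ≤ u.len) : TSeq Q where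
  len := δ - γ
  pos := by rw [Ordinal.lt_sub]; simpa using h1
  toFun := fun ζ => u.toFun ⟨γ + ζ.1, lt_of_lt_of_le (Ordinal.lt_sub.mp ζ.2) h2⟩

/-- The tail `u↾[γ, |u|)`. -/
noncomputable def tail (u : TSeq Q) (γ : Ordinal.{0}) (h : γ < u.len) : TSeq Q :=
  u.seg γ u.len h le_rfl

/-- `u` is indecomposable: it embeds into each of its tails. -/
def Indec [Preorder Q] (u : TSeq Q) : Prop :=
  ∀ γ (h : γ < u.len), u.Emb (u.tail γ h)

/-- `u` is weakly indecomposable. -/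
def WIndec [Preorder Q] (u : TSeq Q) : Prop :=
  ∀ γ (h : γ < u.len), u.WEmb (u.tail γ h)

/-- `u ⊴ v`: cofinal embeddability. -/
def CofEmb [Preorder Q] (u v : TSeq Q) : Prop :=
  ∀ γ (h : γ < v.len), ∃ δ, ∃ h' : δ < u.len, (u.tail δ h').Emb (v.tail γ h)

/-- `u ⊴* v`: weak cofinal embeddability. -/
def WCofEmb [Preorder Q] (u v : TSeq Q) : Prop :=
  ∀ γ (h : γ < v.len), ∃ δ, ∃ h' : δ < u.len, (u.tail δ h').WEmb (v.tail γ h)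

end TSeq

/-! ### The hierarchy `V̇(Q)` -/

/-- Hereditarily countable, hereditarily nonempty sets with urelements from `Q`. -/
inductive Vdot (Q : Type u) : Type u where
  | up : Q → Vdot Q
  | sup : (ℕ → Vdot Q) → Vdot Q

namespace Vdot

variable {Q : Type u}

/-- Rank plus one for sets; `0` on urelements. -/
noncomputable def rkp : Vdot Q → Ordinal.{0}
  | .up _ => 0
  | .sup f => (⨆ n, rkp (f n)) + 1

/-- The rank of an element of `V̇(Q)` (`0` on urelements). -/
noncomputable def rk : Vdot Q → Ordinal.{0}
  | .up _ => 0
  | .sup f => ⨆ n, rkp (f n)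

/-- `x` is an urelement. -/
def IsUr (x : Vdot Q) : Prop := ∃ q, x = up q

/-- Membership in `V̇_α(Q)`: urelements, and sets of rank `< α`. -/
noncomputable def memV (α : Ordinal.{0}) (x : Vdot Q) : Prop := x.IsUr ∨ x.rk < α

/-- Auxiliary: `up p ≲ y` (equivalently `up p ≲* y`). -/
def leUp [Preorder Q] (p : Q) : Vdot Q → Prop
  | .up q => p ≤ q
  | .sup g => ∃ j, leUp p (g j)

/-- The relation `≲` on `V̇(Q)`. -/
def vle [Preorder Q] : Vdot Q → Vdot Q → Prop
  | .up p, y => leUp p y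
  | .sup _, .up _ => False
  | .sup f, .sup g => ∀ i, ∃ j, vle (f i) (g j)

/-- The relation `≲*` on `V̇(Q)`. -/
def vles [Preorder Q] : Vdot Q → Vdot Q → Prop
  | .up p, y => leUp p y
  | .sup f, .up q => ∀ i, vles (f i) (up q)
  | .sup f, .sup g => ∀ i, ∃ j, vles (f i) (g j)

/-- The support of an element of `V̇(Q)`. -/
def supp : Vdot Q → Set Q
  | .up q => {q}
  | .sup f => ⋃ n, supp (f n)

end Vdot


/-! ### Auxiliary development for statement 2 -/

section Aux

theorem initSeg_refl (σ : Finset ℕ) : InitSeg σ σ :=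
  ⟨Finset.Subset.refl σ, fun _ _ b hb _ => hb⟩

theorem initSeg_trans {σ τ ρ : Finset ℕ} (h1 : InitSeg σ τ) (h2 : InitSeg τ ρ) :
    InitSeg σ ρ :=
  ⟨h1.1.trans h2.1, fun a ha b hb hba => h1.2 a ha b (h2.2 a (h1.1 ha) b hb hba) hba⟩

theorem initSeg_antisymm {σ τ : Finset ℕ} (h1 : InitSeg σ τ) (h2 : InitSeg τ σ) : σ = τ :=
  Finset.Subset.antisymm h1.1 h2.1

theorem initSeg_empty (τ : Finset ℕ) : InitSeg ∅ τ :=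
  ⟨Finset.empty_subset τ, fun a ha => absurd ha (Finset.notMem_empty a)⟩

theorem initSegSet_of_initSeg {σ τ : Finset ℕ} {X : Set ℕ} (h1 : InitSeg σ τ)
    (h2 : InitSegSet τ X) : InitSegSet σ X :=
  ⟨fun a ha => h2.1 (h1.1 ha), fun a ha b hb hba => h1.2 a ha b (h2.2 a (h1.1 ha) b hb hba) hba⟩

theorem initSeg_iff_initSegSet {σ τ : Finset ℕ} : InitSeg σ τ ↔ InitSegSet σ ↑τ := by
  constructor
  · rintro ⟨h1, h2⟩
    exact ⟨by exact_mod_cast h1, fun a ha b hb => h2 a ha b (by exact_mod_cast hb)⟩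
  · rintro ⟨h1, h2⟩
    exact ⟨by exact_mod_cast h1, fun a ha b hb => h2 a ha b (by exact_mod_cast hb)⟩

/-- Two initial segments of the same set are comparable. -/
theorem initSegSet_comparable {σ τ : Finset ℕ} {X : Set ℕ}
    (h1 : InitSegSet σ X) (h2 : InitSegSet τ X) : InitSeg σ τ ∨ InitSeg τ σ := by
  have hsub : σ ⊆ τ ∨ τ ⊆ σ := by
    by_contra h
    push_neg at h
    obtain ⟨a, ha, hat⟩ := Finset.not_subset.mp h.1
    obtain ⟨b, hb, hbs⟩ := Finset.not_subset.mp h.2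
    rcases le_total a b with hab | hba
    · exact hat (h2.2 b hb a (h1.1 ha) hab)
    · exact hbs (h1.2 a ha b (h2.1 hb) hba)
  rcases hsub with h | h
  · exact Or.inl ⟨h, fun a ha b hb hba => h1.2 a ha b (h2.1 hb) hba⟩
  · exact Or.inr ⟨h, fun a ha b hb hba => h2.2 a ha b (h1.1 hb) hba⟩

theorem initSeg_min' {σ τ : Finset ℕ} (h : InitSeg σ τ) (hσ : σ.Nonempty) :
    σ.min' hσ = τ.min' (hσ.mono h.1) := by
  have h1 : τ.min' (hσ.mono h.1) ≤ σ.min' hσ := Finset.min'_le _ _ (h.1 (σ.min'_mem hσ))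
  have h2 : τ.min' (hσ.mono h.1) ∈ σ :=
    h.2 _ (σ.min'_mem hσ) _ (τ.min'_mem _) h1
  exact le_antisymm (σ.min'_le _ h2) h1

theorem initSeg_erase {σ τ : Finset ℕ} (h : InitSeg σ τ) (n : ℕ) :
    InitSeg (σ.erase n) (τ.erase n) := by
  refine ⟨Finset.erase_subset_erase n h.1, fun a ha b hb hba => ?_⟩
  rw [Finset.mem_erase] at ha hb ⊢
  exact ⟨hb.1, h.2 a ha.2 b hb.2 hba⟩

theorem initSeg_insert {σ τ : Finset ℕ} {n : ℕ} (h : InitSeg σ τ) (hn : ∀ b ∈ τ, n < b) :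
    InitSeg (insert n σ) (insert n τ) := by
  refine ⟨Finset.insert_subset_insert n h.1, fun a ha b hb hba => ?_⟩
  rw [Finset.mem_insert] at ha hb ⊢
  rcases hb with rfl | hb
  · exact Or.inl rfl
  · rcases ha with rfl | ha
    · exact absurd hba (not_le.mpr (hn b hb))
    · exact Or.inr (h.2 a ha b hb hba)

theorem initSeg_of_insert {σ τ : Finset ℕ} {n : ℕ} (hσ : n ∉ σ) (hτ : n ∉ τ)
    (h : InitSeg (insert n σ) (insert n τ)) : InitSeg σ τ := by
  refine ⟨fun a ha => ?_, fun a ha b hb hba => ?_⟩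
  · rcases Finset.mem_insert.mp (h.1 (Finset.mem_insert_of_mem ha)) with rfl | h'
    · exact absurd ha hσ
    · exact h'
  · rcases Finset.mem_insert.mp
      (h.2 a (Finset.mem_insert_of_mem ha) b (Finset.mem_insert_of_mem hb) hba) with rfl | h'
    · exact absurd hb hτ
    · exact h'

end Aux


section FrontBasics

theorem Front.nonempty_of_mem (Fr : Front) {σ : Finset ℕ} (h : σ ∈ Fr.F) : σ.Nonempty := by
  rcases Finset.eq_empty_or_nonempty σ with rfl | h'
  · exfalso
    refine Fr.infinite (Set.Finite.subset (Set.finite_singleton (∅ : Finset ℕ)) ?_)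
    intro τ hτ
    rw [Set.mem_singleton_iff, ← Fr.antichain ∅ h τ hτ (initSeg_empty τ)]
  · exact h'

theorem Front.exists_initSegSet (Fr : Front) {Y : Set ℕ} (hY : Y.Infinite)
    (hYU : Y ⊆ Fr.union) : ∃ σ ∈ Fr.F, InitSegSet σ Y :=
  Fr.covers Y hY hYU

theorem Front.initSegSet_unique (Fr : Front) {σ τ : Finset ℕ} {X : Set ℕ}
    (hσ : σ ∈ Fr.F) (hτ : τ ∈ Fr.F) (h1 : InitSegSet σ X) (h2 : InitSegSet τ X) : σ = τ := by
  rcases initSegSet_comparable h1 h2 with h | h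
  · exact Fr.antichain σ hσ τ hτ h
  · exact (Fr.antichain τ hτ σ hσ h).symm

theorem initSegSet_min {σ : Finset ℕ} {X : Set ℕ} (h : InitSegSet σ X) (hne : σ.Nonempty) :
    σ.min' hne = sInf X := by
  have hXne : sInf X ∈ X := Nat.sInf_mem ⟨σ.min' hne, h.1 (σ.min'_mem hne)⟩
  have h1 : sInf X ≤ σ.min' hne := Nat.sInf_le (h.1 (σ.min'_mem hne))
  have h2 : sInf X ∈ σ := h.2 _ (σ.min'_mem hne) _ hXne h1
  exact le_antisymm (σ.min'_le _ h2) h1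

theorem Front.union_infinite (Fr : Front) : Fr.union.Infinite := by
  rw [Set.Infinite]
  intro hfin
  have h1 : (((↑) : Finset ℕ → Set ℕ) ⁻¹' {s | s ⊆ Fr.union}).Finite :=
    Set.Finite.preimage Finset.coe_injective.injOn hfin.finite_subsets
  refine Fr.infinite (Set.Finite.subset h1 (fun σ hσ => ?_))
  exact fun n hn => ⟨σ, hσ, by exact_mod_cast hn⟩

/-- The restriction of a front to an infinite subset of its union. -/
noncomputable def Front.restrict (Fr : Front) (X : Set ℕ) (hX : X.Infinite)
    (hXU : X ⊆ Fr.union) : Front where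
  F := {σ | σ ∈ Fr.F ∧ ↑σ ⊆ X}
  infinite := by
    intro hfin
    have hB : (⋃ σ ∈ {σ | σ ∈ Fr.F ∧ ↑σ ⊆ X}, (↑σ : Set ℕ)).Finite :=
      Set.Finite.biUnion hfin (fun σ _ => σ.finite_toSet)
    have hX' : (X \ ⋃ σ ∈ {σ | σ ∈ Fr.F ∧ ↑σ ⊆ X}, (↑σ : Set ℕ)).Infinite :=
      hX.diff hB
    obtain ⟨σ, hσF, hseg⟩ := Fr.exists_initSegSet hX' (fun n hn => hXU hn.1)
    have hne := Fr.nonempty_of_mem hσF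
    obtain ⟨a, ha⟩ := hne
    have haX : a ∈ X \ _ := hseg.1 ha
    refine haX.2 ?_
    refine Set.mem_biUnion ⟨hσF, fun b hb => (hseg.1 hb).1⟩ ha
  antichain := fun σ hσ τ hτ h => Fr.antichain σ hσ.1 τ hτ.1 h
  covers := by
    intro Y hY hYsub
    have hYX : Y ⊆ X := fun n hn => by
      obtain ⟨σ, hσ, hnσ⟩ := hYsub hn
      exact hσ.2 hnσ
    have hYU : Y ⊆ Fr.union := fun n hn => by
      obtain ⟨σ, hσ, hnσ⟩ := hYsub hn
      exact ⟨σ, hσ.1, hnσ⟩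
    obtain ⟨σ, hσF, hseg⟩ := Fr.exists_initSegSet hY hYU
    exact ⟨σ, ⟨hσF, fun b hb => hYX (hseg.1 hb)⟩, hseg⟩
  rk := Fr.rk
  rk_strict := by
    rintro σ τ ⟨ρ1, hρ1, h1, h1'⟩ ⟨ρ2, hρ2, h2, h2'⟩ hστ hne
    exact Fr.rk_strict σ τ ⟨ρ1, hρ1.1, h1, h1'⟩ ⟨ρ2, hρ2.1, h2, h2'⟩ hστ hne

theorem Front.restrict_rank (Fr : Front) (X : Set ℕ) (hX : X.Infinite)
    (hXU : X ⊆ Fr.union) : (Fr.restrict X hX hXU).rank = Fr.rank := rfl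

end FrontBasics


section Derive

variable (Fr : Front) {X : Set ℕ} {n : ℕ}

/-- Members of the derived family through arbitrary infinite sets above `n`. -/
theorem derive_aux (hXU : X ⊆ Fr.union) (hnX : n ∈ X) (hnF : {n} ∉ Fr.F)
    {Z : Set ℕ} (hZ : Z.Infinite) (hZX : Z ⊆ X) (hZn : ∀ m ∈ Z, n < m) :
    ∃ σ : Finset ℕ, (insert n σ ∈ Fr.F ∧ ↑σ ⊆ X ∧ ∀ a ∈ σ, n < a) ∧
      InitSegSet σ Z ∧ σ.Nonempty := by
  have hW : (insert n Z).Infinite := hZ.mono (Set.subset_insert n Z)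
  have hWU : insert n Z ⊆ Fr.union := by
    intro m hm
    rcases hm with rfl | hm
    · exact hXU hnX
    · exact hXU (hZX hm)
  obtain ⟨ρ, hρF, hseg⟩ := Fr.exists_initSegSet hW hWU
  have hρne := Fr.nonempty_of_mem hρF
  have hnρ : n ∈ ρ := by
    obtain ⟨a, ha⟩ := hρne
    have haW : a ∈ insert n Z := hseg.1 ha
    have hna : n ≤ a := by
      rcases haW with rfl | haW
      · exact le_rfl
      · exact (hZn a haW).le
    exact hseg.2 a ha n (Set.mem_insert n Z) hna
  set σ := ρ.erase n with hσdef
  have hins : insert n σ = ρ := Finset.insert_erase hnρ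
  have hσZ : ↑σ ⊆ Z := by
    intro a ha
    have ha' : a ∈ ρ := Finset.mem_of_mem_erase (by exact_mod_cast ha)
    have hane : a ≠ n := Finset.ne_of_mem_erase (by exact_mod_cast ha)
    rcases hseg.1 ha' with rfl | h
    · exact absurd rfl hane
    · exact h
  have hσn : ∀ a ∈ σ, n < a := fun a ha => hZn a (hσZ ha)
  refine ⟨σ, ⟨hins ▸ hρF, fun a ha => hZX (hσZ ha), hσn⟩, ⟨hσZ, ?_⟩, ?_⟩
  · intro a ha b hb hba
    have hbρ : b ∈ ρ := hseg.2 a (Finset.mem_of_mem_erase ha) b (Set.mem_insert_of_mem n hb) hba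
    exact Finset.mem_erase.mpr ⟨(hZn b hb).ne', hbρ⟩
  · rcases Finset.eq_empty_or_nonempty σ with hemp | hne
    · exfalso
      rw [hemp] at hins
      have : ({n} : Finset ℕ) = ρ := by rw [← hins]; rfl
      exact hnF (this ▸ hρF)
    · exact hne

/-- The derived front at `n` inside `X`. -/
noncomputable def Front.derive (hX : X.Infinite) (hXU : X ⊆ Fr.union) (hnX : n ∈ X)
    (hnF : {n} ∉ Fr.F) : Front where
  F := {σ | insert n σ ∈ Fr.F ∧ ↑σ ⊆ X ∧ ∀ a ∈ σ, n < a}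
  infinite := by
    rw [Set.Infinite]
    intro hfin
    have hB : (⋃ σ ∈ {σ : Finset ℕ | insert n σ ∈ Fr.F ∧ ↑σ ⊆ X ∧ ∀ a ∈ σ, n < a},
        (↑σ : Set ℕ)).Finite := Set.Finite.biUnion hfin (fun σ _ => σ.finite_toSet)
    have hZ : (X \ ({m | m ≤ n} ∪ _)).Infinite := hX.diff ((Set.finite_le_nat n).union hB)
    obtain ⟨σ, hσG, hseg, hσne⟩ := derive_aux Fr hXU hnX hnF hZ
      (fun m hm => hm.1) (fun m hm => by
        by_contra h
        exact hm.2 (Or.inl (not_lt.mp h)))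
    obtain ⟨a, ha⟩ := hσne
    exact (hseg.1 ha).2 (Or.inr (Set.mem_biUnion hσG ha))
  antichain := by
    intro σ hσ τ hτ h
    have h' : InitSeg (insert n σ) (insert n τ) := initSeg_insert h hτ.2.2
    have heq := Fr.antichain _ hσ.1 _ hτ.1 h'
    have hnσ : n ∉ σ := fun hc => lt_irrefl n (hσ.2.2 n hc)
    have hnτ : n ∉ τ := fun hc => lt_irrefl n (hτ.2.2 n hc)
    rw [← Finset.erase_insert hnσ, ← Finset.erase_insert hnτ, heq]
  covers := by
    intro Y hY hYsub
    have hYX : Y ⊆ X := fun m hm => by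
      obtain ⟨σ, hσ, hmσ⟩ := hYsub hm
      exact hσ.2.1 hmσ
    have hYn : ∀ m ∈ Y, n < m := fun m hm => by
      obtain ⟨σ, hσ, hmσ⟩ := hYsub hm
      exact hσ.2.2 m hmσ
    obtain ⟨σ, hσG, hseg, _⟩ := derive_aux Fr hXU hnX hnF hY hYX hYn
    exact ⟨σ, hσG, hseg⟩
  rk := fun σ => Fr.rk (insert n σ)
  rk_strict := by
    rintro σ τ ⟨ρ1, hρ1, h1, h1'⟩ ⟨ρ2, hρ2, h2, h2'⟩ hστ hne
    have hnσ : n ∉ σ := fun hc => lt_irrefl n (hρ1.2.2 n (h1.1 hc))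
    have hnτ : n ∉ τ := fun hc => lt_irrefl n (hρ2.2.2 n (h2.1 hc))
    have hnρ1 : n ∉ ρ1 := fun hc => lt_irrefl n (hρ1.2.2 n hc)
    have hnρ2 : n ∉ ρ2 := fun hc => lt_irrefl n (hρ2.2.2 n hc)
    refine Fr.rk_strict (insert n σ) (insert n τ)
      ⟨insert n ρ1, hρ1.1, initSeg_insert h1 hρ1.2.2, fun hc => h1' ?_⟩
      ⟨insert n ρ2, hρ2.1, initSeg_insert h2 hρ2.2.2, fun hc => h2' ?_⟩
      (initSeg_insert hστ (fun b hb => hρ2.2.2 b (h2.1 hb))) (fun hc => hne ?_)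
    · rw [← Finset.erase_insert hnσ, ← Finset.erase_insert hnρ1, hc]
    · rw [← Finset.erase_insert hnτ, ← Finset.erase_insert hnρ2, hc]
    · rw [← Finset.erase_insert hnσ, ← Finset.erase_insert hnτ, hc]

theorem Front.derive_rank_lt (hX : X.Infinite) (hXU : X ⊆ Fr.union) (hnX : n ∈ X)
    (hnF : {n} ∉ Fr.F) : (Fr.derive hX hXU hnX hnF).rank < Fr.rank := by
  obtain ⟨σ0, hσ0⟩ := (Fr.derive hX hXU hnX hnF).infinite.nonempty
  have hσ0ne : σ0.Nonempty := by
    rcases Finset.eq_empty_or_nonempty σ0 with rfl | h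
    · exfalso
      exact hnF hσ0.1
    · exact h
  have hρ : insert n σ0 ∈ Fr.F := hσ0.1
  have hne1 : ({n} : Finset ℕ) ≠ insert n σ0 := by
    intro hc
    obtain ⟨a, ha⟩ := hσ0ne
    have : a ∈ ({n} : Finset ℕ) := hc ▸ Finset.mem_insert_of_mem ha
    exact (hσ0.2.2 a ha).ne' (Finset.mem_singleton.mp this)
  have hseg1 : InitSeg {n} (insert n σ0) := by
    refine ⟨Finset.singleton_subset_iff.mpr (Finset.mem_insert_self n σ0), ?_⟩
    intro a ha b hb hba
    rw [Finset.mem_singleton] at ha ⊢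
    subst ha
    rcases Finset.mem_insert.mp hb with rfl | hb'
    · rfl
    · exact absurd hba (not_le.mpr (hσ0.2.2 b hb'))
  have hlt := Fr.rk_strict ∅ {n}
    ⟨insert n σ0, hρ, initSeg_empty _, fun hc =>
      (Finset.insert_ne_empty n σ0) hc.symm⟩
    ⟨insert n σ0, hρ, hseg1, hne1⟩
    (initSeg_empty _) (fun hc => (Finset.singleton_ne_empty n) hc.symm)
  have : (Fr.derive hX hXU hnX hnF).rank = Fr.rk {n} := by
    show Fr.rk (insert n ∅) = Fr.rk {n}
    simp
  rw [this, Front.rank]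
  exact hlt

end Derive


section Partition

/-- Nash–Williams partition theorem for fronts. -/
theorem front_partition (Fr : Front) (S : Set (Finset ℕ)) :
    ∃ X : Set ℕ, X.Infinite ∧ X ⊆ Fr.union ∧
      ((∀ σ ∈ Fr.F, ↑σ ⊆ X → σ ∈ S) ∨ (∀ σ ∈ Fr.F, ↑σ ⊆ X → σ ∉ S)) := by
  suffices h : ∀ β : Ordinal.{0}, ∀ Fr : Front, Fr.rank = β →
      ∀ S : Set (Finset ℕ), ∃ X : Set ℕ, X.Infinite ∧ X ⊆ Fr.union ∧
        ((∀ σ ∈ Fr.F, ↑σ ⊆ X → σ ∈ S) ∨ (∀ σ ∈ Fr.F, ↑σ ⊆ X → σ ∉ S)) by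
    exact h Fr.rank Fr rfl S
  intro β
  induction β using Ordinal.induction with
  | h β IH =>
  intro Fr hβ S
  classical
  -- Step lemma
  have hstep : ∀ X : Set ℕ, X.Infinite → X ⊆ Fr.union →
      ∃ (X' : Set ℕ) (c : Bool), X'.Infinite ∧ X' ⊆ X ∧ (∀ m ∈ X', sInf X < m) ∧
        (∀ σ ∈ Fr.F, ↑σ ⊆ insert (sInf X) X' → sInf X ∈ σ → (σ ∈ S ↔ c = true)) := by
    intro X hX hXU
    set n := sInf X with hn
    have hnX : n ∈ X := Nat.sInf_mem hX.nonempty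
    by_cases hnF : ({n} : Finset ℕ) ∈ Fr.F
    · -- degenerate case
      refine ⟨X \ {m | m ≤ n}, decide (({n} : Finset ℕ) ∈ S),
        hX.diff (Set.finite_le_nat n), fun m hm => hm.1,
        fun m hm => not_le.mp (fun hc => hm.2 hc), ?_⟩
      intro σ hσ hsub hnσ
      have hseg : InitSeg {n} σ := by
        refine ⟨Finset.singleton_subset_iff.mpr hnσ, ?_⟩
        intro a ha b hb hba
        rw [Finset.mem_singleton] at ha ⊢
        subst ha
        rcases hsub hb with rfl | hb'
        · rfl
        · exact absurd hb'.2 (not_not.mpr hba)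
      have := Fr.antichain _ hnF _ hσ hseg
      rw [← this, decide_eq_true_eq]
    · -- main case: use the derived front
      set G := Fr.derive hX hXU hnX hnF with hG
      have hGrank : G.rank < β := hβ ▸ Fr.derive_rank_lt hX hXU hnX hnF
      obtain ⟨X', hX'inf, hX'U, hmono⟩ := IH G.rank hGrank G rfl {σ | insert n σ ∈ S}
      have hX'X : X' ⊆ X := by
        intro m hm
        obtain ⟨σ, hσ, hmσ⟩ := hX'U hm
        exact hσ.2.1 hmσ
      have hX'n : ∀ m ∈ X', n < m := by
        intro m hm
        obtain ⟨σ, hσ, hmσ⟩ := hX'U hm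
        exact hσ.2.2 m hmσ
      have key : ∀ c : Bool, ((∀ σ ∈ G.F, ↑σ ⊆ X' → (insert n σ ∈ S ↔ c = true))) →
          ∀ σ ∈ Fr.F, ↑σ ⊆ insert n X' → n ∈ σ → (σ ∈ S ↔ c = true) := by
        intro c hc σ hσ hsub hnσ
        have hσ'X' : ↑(σ.erase n) ⊆ X' := by
          intro a ha
          have haσ : a ∈ σ := Finset.mem_of_mem_erase (by exact_mod_cast ha)
          have hane : a ≠ n := Finset.ne_of_mem_erase (by exact_mod_cast ha)
          rcases hsub haσ with rfl | h
          · exact absurd rfl hane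
          · exact h
        have hins : insert n (σ.erase n) = σ := Finset.insert_erase hnσ
        have hσ'G : σ.erase n ∈ G.F := by
          refine ⟨by rw [hins]; exact hσ, fun a ha => hX'X (hσ'X' ha),
            fun a ha => hX'n a (hσ'X' ha)⟩
        have := hc _ hσ'G hσ'X'
        rwa [hins] at this
      rcases hmono with hall | hnone
      · exact ⟨X', true, hX'inf, hX'X, hX'n,
          key true (fun σ hσ hsub => ⟨fun _ => rfl, fun _ => hall σ hσ hsub⟩)⟩
      · refine ⟨X', false, hX'inf, hX'X, hX'n,
          key false (fun σ hσ hsub => ⟨fun h => absurd h (hnone σ hσ hsub), fun h => by simp at h⟩)⟩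
  choose next col hInf hSub hGt hKey using hstep
  -- the fusion sequence
  let T := {X : Set ℕ // X.Infinite ∧ X ⊆ Fr.union}
  let seq : ℕ → T := fun i => Nat.rec
    ⟨Fr.union, Fr.union_infinite, fun _ h => h⟩
    (fun _ p => ⟨next p.1 p.2.1 p.2.2, hInf p.1 p.2.1 p.2.2,
      fun m hm => p.2.2 (hSub p.1 p.2.1 p.2.2 hm)⟩) i
  have hseq_succ : ∀ i : ℕ, (seq (i + 1)).1 = next (seq i).1 (seq i).2.1 (seq i).2.2 :=
    fun i => rfl
  set nn : ℕ → ℕ := fun i => sInf (seq i).1 with hnn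
  have hmem : ∀ i, nn i ∈ (seq i).1 := fun i => Nat.sInf_mem (seq i).2.1.nonempty
  have hsub_succ : ∀ i, (seq (i + 1)).1 ⊆ (seq i).1 := by
    intro i
    rw [hseq_succ]
    exact hSub _ _ _
  have hsub : ∀ i j, i ≤ j → (seq j).1 ⊆ (seq i).1 := by
    intro i j hij
    induction j with
    | zero => rw [Nat.le_zero.mp hij]
    | succ j ihj =>
      rcases Nat.lt_or_ge i (j + 1) with h | h
      · exact fun m hm => ihj (Nat.lt_succ_iff.mp h) (hsub_succ j hm)
      · rw [le_antisymm hij h]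
  have hgt : ∀ i, ∀ m ∈ (seq (i + 1)).1, nn i < m := by
    intro i m hm
    rw [hseq_succ] at hm
    exact hGt _ _ _ m hm
  have hnmono : StrictMono nn := strictMono_nat_of_lt_succ (fun i => hgt i _ (hmem (i + 1)))
  -- choose an infinite monochromatic set of indices
  set cc : ℕ → Bool := fun i => col (seq i).1 (seq i).2.1 (seq i).2.2 with hcc
  have hIc : ∃ c : Bool, {i : ℕ | cc i = c}.Infinite := by
    by_contra hcon
    push_neg at hcon
    have h1 : ¬ {i : ℕ | cc i = true}.Infinite := Set.not_infinite.mpr (hcon true)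
    have h2 : ¬ {i : ℕ | cc i = false}.Infinite := Set.not_infinite.mpr (hcon false)
    rw [Set.not_infinite] at h1 h2
    have : (Set.univ : Set ℕ).Finite := by
      refine Set.Finite.subset (h1.union h2) ?_
      intro i _
      rcases Bool.eq_false_or_eq_true (cc i) with h | h
      · exact Or.inl h
      · exact Or.inr h
    exact Set.infinite_univ this
  obtain ⟨c, hI⟩ := hIc
  refine ⟨nn '' {i | cc i = c}, hI.image (hnmono.injective.injOn), ?_, ?_⟩
  · rintro m ⟨i, _, rfl⟩
    exact (seq i).2.2 (hmem i)
  · have main : ∀ σ ∈ Fr.F, ↑σ ⊆ nn '' {i | cc i = c} → (σ ∈ S ↔ c = true) := by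
      intro σ hσ hsubX
      have hσne := Fr.nonempty_of_mem hσ
      obtain ⟨i, hiI, hi⟩ := hsubX (by exact_mod_cast σ.min'_mem hσne)
      have hsub' : ↑σ ⊆ insert (nn i) (seq (i + 1)).1 := by
        intro a ha
        obtain ⟨j, hjI, hj⟩ := hsubX ha
        rcases eq_or_ne (nn j) (nn i) with he | hne
        · rw [← hj, he]; exact Set.mem_insert _ _
        · have : nn i < nn j := by
            have h1 : σ.min' hσne ≤ a := σ.min'_le a (by exact_mod_cast ha)
            rw [← hi, ← hj] at h1
            rcases lt_or_eq_of_le h1 with h | h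
            · exact h
            · exact absurd h.symm hne
          have hij : i < j := hnmono.lt_iff_lt.mp this
          exact Set.mem_insert_of_mem _ (hj ▸ hsub (i + 1) j hij (hmem j))
      have hnσ : nn i ∈ σ := hi ▸ σ.min'_mem hσne
      have h2 : σ ∈ S ↔ cc i = true := hKey (seq i).1 (seq i).2.1 (seq i).2.2 σ hσ hsub' hnσ
      have h3 : cc i = c := hiI
      rw [h2, h3]
    by_cases hc : c = true
    · subst hc
      exact Or.inl (fun σ hσ hs => (main σ hσ hs).mpr rfl)
    · refine Or.inr (fun σ hσ hs hmemS => ?_)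
      exact hc ((main σ hσ hs).mp hmemS)

end Partition


section ExtRel

/-- The "proper extension within the tree of `F0`" relation. -/
def extRel (F0 : Set (Finset ℕ)) (a b : Finset ℕ) : Prop :=
  InitSeg b a ∧ a ≠ b ∧ ∃ ρ ∈ F0, InitSeg a ρ

theorem extRel_wf (F0 : Set (Finset ℕ))
    (hanti : ∀ σ ∈ F0, ∀ τ ∈ F0, InitSeg σ τ → σ = τ)
    (hcov : ∀ Y : Set ℕ, Y.Infinite → Y ⊆ {n | ∃ σ ∈ F0, n ∈ σ} →
      ∃ ρ ∈ F0, InitSegSet ρ Y) : WellFounded (extRel F0) := by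
  haveI : IsIrrefl (Finset ℕ) (extRel F0) := ⟨fun a h => h.2.1 rfl⟩
  haveI : IsTrans (Finset ℕ) (extRel F0) := ⟨fun a b c hab hbc =>
    ⟨initSeg_trans hbc.1 hab.1,
     fun hc => hbc.2.1 (initSeg_antisymm hbc.1 (hc ▸ hab.1)).symm, hab.2.2⟩⟩
  haveI : IsStrictOrder (Finset ℕ) (extRel F0) := ⟨⟩
  rw [RelEmbedding.wellFounded_iff_isEmpty]
  constructor
  rintro f
  set g : ℕ → Finset ℕ := fun n => f n with hg
  have hrel : ∀ n : ℕ, extRel F0 (g (n + 1)) (g n) :=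
    fun n => f.map_rel_iff.mpr (Nat.lt_succ_self n)
  have hchain : ∀ n m : ℕ, n ≤ m → InitSeg (g n) (g m) := by
    intro n m hnm
    induction m with
    | zero => rw [Nat.le_zero.mp hnm]; exact initSeg_refl _
    | succ m ihm =>
      rcases Nat.lt_or_ge n (m + 1) with h | h
      · exact initSeg_trans (ihm (Nat.lt_succ_iff.mp h)) (hrel m).1
      · rw [le_antisymm hnm h]; exact initSeg_refl _
  have hcard : ∀ n : ℕ, n ≤ (g n).card := by
    intro n
    induction n with
    | zero => exact Nat.zero_le _
    | succ n ihn =>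
      have h1 : (g n).card < (g (n + 1)).card :=
        Finset.card_lt_card (Finset.ssubset_iff_subset_ne.mpr ⟨(hrel n).1.1, fun hc =>
          (hrel n).2.1 hc.symm⟩)
      omega
  set Y : Set ℕ := ⋃ n, ↑(g n) with hY
  have hgY : ∀ n, (↑(g n) : Set ℕ) ⊆ Y := fun n => Set.subset_iUnion (fun n => (↑(g n) : Set ℕ)) n
  have hYinf : Y.Infinite := by
    rw [Set.Infinite]
    intro hfin
    have := hcard (hfin.toFinset.card + 1)
    have h2 : (g (hfin.toFinset.card + 1)).card ≤ hfin.toFinset.card :=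
      Finset.card_le_card (fun x hx => hfin.mem_toFinset.mpr (hgY _ hx))
    omega
  have hYsub : Y ⊆ {n | ∃ σ ∈ F0, n ∈ σ} := by
    rintro m hm
    obtain ⟨s, ⟨n, rfl⟩, hms⟩ := hm
    obtain ⟨ρ, hρ, hseg⟩ := (hrel n).2.2
    exact ⟨ρ, hρ, hseg.1 ((hrel n).1.1 hms)⟩
  have hsegY : ∀ n, InitSegSet (g n) Y := by
    intro n
    refine ⟨hgY n, fun a ha b hb hba => ?_⟩
    obtain ⟨s, ⟨m, rfl⟩, hbs⟩ := hb
    rcases le_or_gt m n with h | h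
    · exact (hchain m n h).1 hbs
    · exact (hchain n m h.le).2 a ha b hbs hba
  obtain ⟨ρ, hρ, hsegρ⟩ := hcov Y hYinf hYsub
  set N : ℕ := ρ.card + 1 with hN
  have hcmp : InitSeg ρ (g N) := by
    rcases initSegSet_comparable hsegρ (hsegY N) with h | h
    · exact h
    · exfalso
      have := Finset.card_le_card h.1
      have := hcard N
      omega
  obtain ⟨ρ1, hρ1, hseg1⟩ := (hrel (N - 1)).2.2
  have hNeq : N - 1 + 1 = N := by omega
  rw [hNeq] at hseg1
  have hρeq : ρ = ρ1 := hanti ρ hρ ρ1 hρ1 (initSeg_trans hcmp hseg1)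
  have hgNρ : g N = ρ := initSeg_antisymm (hρeq ▸ hseg1) hcmp
  obtain ⟨ρ2, hρ2, hseg2⟩ := (hrel N).2.2
  have hρeq2 : ρ = ρ2 := hanti ρ hρ ρ2 hρ2 (initSeg_trans
    (initSeg_trans hcmp (hrel N).1) hseg2)
  have hgN1ρ : g (N + 1) = ρ := initSeg_antisymm (hρeq2 ▸ hseg2)
    (hgNρ ▸ (hrel N).1)
  exact (hrel N).2.1 (hgN1ρ.trans hgNρ.symm)

end ExtRel


section PairFront

theorem initSeg_unique_front (Fr : Front) {σ σ' ρ : Finset ℕ} (hσ : σ ∈ Fr.F)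
    (hσ' : σ' ∈ Fr.F) (h1 : InitSeg σ ρ) (h2 : InitSeg σ' ρ) : σ = σ' :=
  Fr.initSegSet_unique hσ hσ' (initSeg_iff_initSegSet.mp h1) (initSeg_iff_initSegSet.mp h2)

/-- Union of a `◁`-pair: basic structure. -/
theorem tri_union {σ τ : Finset ℕ} (h : Tri σ τ) :
    ∃ hne : (σ ∪ τ).Nonempty,
      InitSeg σ (σ ∪ τ) ∧ InitSeg τ ((σ ∪ τ).erase ((σ ∪ τ).min' hne)) := by
  obtain ⟨hσ, hτ, hmin, hcmp⟩ := h
  set m := σ.min' hσ with hm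
  have hmτ : m ∉ τ := fun hc => absurd (τ.min'_le m hc) (not_le.mpr hmin)
  have ha : InitSeg σ (σ ∪ τ) := by
    refine ⟨Finset.subset_union_left, fun a ha b hb hba => ?_⟩
    rcases Finset.mem_union.mp hb with hbσ | hbτ
    · exact hbσ
    · rcases hcmp with hseg | hseg
      · by_cases ham : a = m
        · subst ham
          exact absurd hba (not_le.mpr (lt_of_lt_of_le hmin (τ.min'_le b hbτ)))
        · exact Finset.mem_of_mem_erase
            (hseg.2 a (Finset.mem_erase.mpr ⟨ham, ha⟩) b hbτ hba)
      · exact Finset.mem_of_mem_erase (hseg.1 hbτ)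
  have hne : (σ ∪ τ).Nonempty := ⟨m, Finset.mem_union_left _ (σ.min'_mem hσ)⟩
  have hmin' : (σ ∪ τ).min' hne = m := (initSeg_min' ha hσ).symm
  refine ⟨hne, ha, ?_⟩
  rw [hmin']
  have hdist : (σ ∪ τ).erase m = (σ.erase m) ∪ τ := by
    rw [Finset.erase_union_distrib, Finset.erase_eq_of_notMem hmτ]
  rw [hdist]
  rcases hcmp with hseg | hseg
  · rw [Finset.union_eq_right.mpr hseg.1]
    exact initSeg_refl τ
  · rw [Finset.union_eq_left.mpr hseg.1]
    exact hseg

/-- Membership in the pair front. -/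
def PairMem (Fr : Front) (ρ : Finset ℕ) : Prop :=
  ∃ hρ : ρ.Nonempty, ∃ σ ∈ Fr.F, ∃ τ ∈ Fr.F,
    InitSeg σ ρ ∧ InitSeg τ (ρ.erase (ρ.min' hρ)) ∧ ρ = σ ∪ τ

theorem pairMem_union_sub (Fr : Front) : {n | ∃ ρ ∈ {ρ | PairMem Fr ρ}, n ∈ ρ} ⊆ Fr.union := by
  rintro n ⟨ρ, ⟨hne, σ, hσ, τ, hτ, hs, ht, rfl⟩, hn⟩
  rcases Finset.mem_union.mp hn with h | h
  · exact ⟨σ, hσ, h⟩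
  · exact ⟨τ, hτ, h⟩

theorem pair_cover (Fr : Front) {Y : Set ℕ} (hY : Y.Infinite) (hYU : Y ⊆ Fr.union) :
    ∃ ρ, PairMem Fr ρ ∧ InitSegSet ρ Y := by
  obtain ⟨σ, hσF, hsegσ⟩ := Fr.exists_initSegSet hY hYU
  set Y' : Set ℕ := Y \ {sInf Y} with hY'
  have hY'inf : Y'.Infinite := hY.diff (Set.finite_singleton _)
  obtain ⟨τ, hτF, hsegτ⟩ := Fr.exists_initSegSet hY'inf (fun m hm => hYU hm.1)
  have hσne := Fr.nonempty_of_mem hσF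
  have hτne := Fr.nonempty_of_mem hτF
  have hsY : sInf Y ∈ Y := Nat.sInf_mem hY.nonempty
  have hsσ : sInf Y ∈ σ :=
    hsegσ.2 _ (σ.min'_mem hσne) _ hsY (Nat.sInf_le (hsegσ.1 (σ.min'_mem hσne)))
  set ρ := σ ∪ τ with hρdef
  have hρY : ↑ρ ⊆ Y := by
    intro a haa
    rcases Finset.mem_union.mp (by exact_mod_cast haa) with h | h
    · exact hsegσ.1 h
    · exact (hsegτ.1 h).1
  have hsegρ : InitSegSet ρ Y := by
    refine ⟨hρY, fun a ha b hb hba => ?_⟩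
    rcases Finset.mem_union.mp ha with haσ | haτ
    · exact Finset.mem_union_left _ (hsegσ.2 a haσ b hb hba)
    · by_cases hbs : b = sInf Y
      · exact Finset.mem_union_left _ (hbs ▸ hsσ)
      · exact Finset.mem_union_right _ (hsegτ.2 a haτ b ⟨hb, hbs⟩ hba)
  have hρne : ρ.Nonempty := ⟨sInf Y, Finset.mem_union_left _ hsσ⟩
  have hminρ : ρ.min' hρne = sInf Y := initSegSet_min hsegρ hρne
  have hsτ : sInf Y ∉ τ := fun hc => (hsegτ.1 hc).2 rfl
  refine ⟨ρ, ⟨hρne, σ, hσF, τ, hτF, ?_, ?_, rfl⟩, hsegρ⟩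
  · refine ⟨Finset.subset_union_left, fun a ha b hb hba => hsegσ.2 a ha b (hρY hb) hba⟩
  · rw [hminρ]
    refine ⟨fun a ha => Finset.mem_erase.mpr ⟨fun hc => hsτ (hc ▸ ha),
      Finset.mem_union_right _ ha⟩, fun a ha b hb hba => ?_⟩
    have hb' : b ∈ ρ := Finset.mem_of_mem_erase hb
    have hbne : b ≠ sInf Y := Finset.ne_of_mem_erase hb
    exact hsegτ.2 a ha b ⟨hρY hb', hbne⟩ hba

theorem pairMem_antichain (Fr : Front) :
    ∀ ρ1 ∈ {ρ | PairMem Fr ρ}, ∀ ρ2 ∈ {ρ | PairMem Fr ρ}, InitSeg ρ1 ρ2 → ρ1 = ρ2 := by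
  rintro ρ1 ⟨hne1, σ1, hσ1, τ1, hτ1, hs1, ht1, he1⟩
    ρ2 ⟨hne2, σ2, hσ2, τ2, hτ2, hs2, ht2, he2⟩ h
  have hσeq : σ1 = σ2 := initSeg_unique_front Fr hσ1 hσ2 (initSeg_trans hs1 h) hs2
  have hmeq : ρ1.min' hne1 = ρ2.min' hne2 := initSeg_min' h hne1
  have ht1' : InitSeg τ1 (ρ2.erase (ρ2.min' hne2)) := by
    refine initSeg_trans ht1 ?_
    rw [← hmeq]
    exact initSeg_erase h _
  have hτeq : τ1 = τ2 := initSeg_unique_front Fr hτ1 hτ2 ht1' ht2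
  rw [he1, he2, hσeq, hτeq]

theorem pairMem_cover' (Fr : Front) :
    ∀ Y : Set ℕ, Y.Infinite → Y ⊆ {n | ∃ ρ ∈ {ρ | PairMem Fr ρ}, n ∈ ρ} →
      ∃ ρ ∈ {ρ | PairMem Fr ρ}, InitSegSet ρ Y := by
  intro Y hY hYsub
  obtain ⟨ρ, h1, h2⟩ := pair_cover Fr hY (fun n hn => pairMem_union_sub Fr (hYsub hn))
  exact ⟨ρ, h1, h2⟩

/-- The pair front of a front. -/
noncomputable def pairFront (Fr : Front) : Front where
  F := {ρ | PairMem Fr ρ}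
  infinite := by
    rw [Set.Infinite]
    intro hfin
    have hB : (⋃ ρ ∈ {ρ | PairMem Fr ρ}, (↑ρ : Set ℕ)).Finite :=
      Set.Finite.biUnion hfin (fun ρ _ => ρ.finite_toSet)
    have hZ : (Fr.union \ _).Infinite := Fr.union_infinite.diff hB
    obtain ⟨ρ, hρ, hseg⟩ := pair_cover Fr hZ (fun m hm => hm.1)
    have hρne : ρ.Nonempty := hρ.1
    obtain ⟨a, ha⟩ := hρne
    exact (hseg.1 ha).2 (Set.mem_biUnion hρ ha)
  antichain := pairMem_antichain Fr
  covers := by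
    intro Y hY hYsub
    exact pairMem_cover' Fr Y hY hYsub
  rk := fun a => ((extRel_wf _ (pairMem_antichain Fr) (pairMem_cover' Fr)).apply a).rank
  rk_strict := by
    rintro σ τ ⟨ρ1, hρ1, h1, h1'⟩ ⟨ρ2, hρ2, h2, h2'⟩ hστ hne
    exact Acc.rank_lt_of_rel ((extRel_wf _ (pairMem_antichain Fr) (pairMem_cover' Fr)).apply _)
      ⟨hστ, Ne.symm hne, ρ2, hρ2, h2⟩

theorem pairFront_union_sub (Fr : Front) : (pairFront Fr).union ⊆ Fr.union :=
  pairMem_union_sub Fr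

end PairFront


section WFqoProd

theorem wfqo_aux {R : Type u} [Preorder R] (hR : WFqo R) (f : ℕ → R)
    (hdec : ∀ i j : ℕ, i ≤ j → f j ≤ f i)
    (hA : {i : ℕ | ¬ f i ≤ f (i + 1)}.Infinite) : False := by
  set A := {i : ℕ | ¬ f i ≤ f (i + 1)} with hAdef
  set φ : ℕ → ℕ := fun k => Nat.rec (hA.exists_gt 0).choose
    (fun _ prev => (hA.exists_gt prev).choose) k with hφ
  have hφsucc : ∀ k : ℕ, φ (k + 1) = (hA.exists_gt (φ k)).choose := fun k => rfl
  have hφmem : ∀ k, φ k ∈ A := by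
    intro k
    cases k with
    | zero => exact (hA.exists_gt 0).choose_spec.1
    | succ k => rw [hφsucc]; exact (hA.exists_gt (φ k)).choose_spec.1
  have hφlt : ∀ k, φ k < φ (k + 1) := by
    intro k
    rw [hφsucc]
    exact (hA.exists_gt (φ k)).choose_spec.2
  refine hR ⟨fun k => f (φ k), fun k => ⟨hdec _ _ (hφlt k).le, fun hc => ?_⟩⟩
  exact hφmem k (hc.trans (hdec _ _ (Nat.succ_le_of_lt (hφlt k))))

theorem wfqo_prod {P : Type u} {Q : Type u} [Preorder P] [Preorder Q]
    (hP : WFqo P) (hQ : WFqo Q) : WFqo (P × Q) := by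
  rintro ⟨x, hx⟩
  have hdec : ∀ i j : ℕ, i ≤ j → x j ≤ x i := by
    intro i j hij
    induction j with
    | zero => rw [Nat.le_zero.mp hij]
    | succ j ihj =>
      rcases Nat.lt_or_ge i (j + 1) with h | h
      · exact le_trans (hx j).1 (ihj (Nat.lt_succ_iff.mp h))
      · rw [le_antisymm hij h]
  have hor : {i : ℕ | ¬ (x i).1 ≤ (x (i + 1)).1}.Infinite ∨
      {i : ℕ | ¬ (x i).2 ≤ (x (i + 1)).2}.Infinite := by
    by_contra h
    push_neg at h
    obtain ⟨h1, h2⟩ := h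
    refine Set.infinite_univ (α := ℕ) (Set.Finite.subset (h1.union h2) ?_)
    intro i _
    have := (hx i).2
    rw [Prod.le_def, not_and_or] at this
    exact this
  rcases hor with h | h
  · exact wfqo_aux hP (fun i => (x i).1) (fun i j hij => (Prod.le_def.mp (hdec i j hij)).1) h
  · exact wfqo_aux hQ (fun i => (x i).2) (fun i j hij => (Prod.le_def.mp (hdec i j hij)).2) h

end WFqoProd

theorem statement2 {P : Type u} {Q : Type u} [Preorder P] [Preorder Q]
    (α : Ordinal.{0}) (hP : IsAlphaWqo α P) (hQ : IsAlphaWqo α Q) :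
    IsAlphaWqo α (P × Q) := by
  refine ⟨wfqo_prod hP.1 hQ.1, ?_⟩
  intro Fr hrank g hbad
  set g1 : Finset ℕ → P := fun σ => (g σ).1 with hg1
  set g2 : Finset ℕ → Q := fun σ => (g σ).2 with hg2
  set S : Set (Finset ℕ) := {ρ | ∀ σ ∈ Fr.F, InitSeg σ ρ → ∀ τ ∈ Fr.F,
    (∀ hρ : ρ.Nonempty, InitSeg τ (ρ.erase (ρ.min' hρ))) → g1 σ ≤ g1 τ} with hS
  obtain ⟨X, hXinf, hXU, hmono⟩ := front_partition (pairFront Fr) S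
  have hXU' : X ⊆ Fr.union := fun n hn => pairFront_union_sub Fr (hXU hn)
  set FrX := Fr.restrict X hXinf hXU' with hFrX
  have hrankX : FrX.rank < α := hrank
  -- the key construction for a `◁`-pair inside `X`
  have key : ∀ σ ∈ Fr.F, ∀ τ ∈ Fr.F, ↑σ ⊆ X → ↑τ ⊆ X → Tri σ τ →
      ∃ ρ ∈ (pairFront Fr).F, ↑ρ ⊆ X ∧ (σ ∪ τ) = ρ ∧
        InitSeg σ ρ ∧ (∀ hρ : ρ.Nonempty, InitSeg τ (ρ.erase (ρ.min' hρ))) := by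
    intro σ hσ τ hτ hσX hτX htri
    obtain ⟨hne, hs, ht⟩ := tri_union htri
    refine ⟨σ ∪ τ, ⟨hne, σ, hσ, τ, hτ, hs, ht, rfl⟩, ?_, rfl, hs, fun _ => ht⟩
    rw [Finset.coe_union]
    exact Set.union_subset hσX hτX
  rcases hmono with hall | hnone
  · -- all pairs are good on the first coordinate: bad array for `Q`
    have hbad2 : BadArray FrX g2 := by
      intro σ hσ τ hτ htri hle2
      obtain ⟨ρ, hρPF, hρX, _, hsρ, htρ⟩ := key σ hσ.1 τ hτ.1 hσ.2 hτ.2 htri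
      have hρS : ρ ∈ S := hall ρ hρPF hρX
      have hle1 : g1 σ ≤ g1 τ := hρS σ hσ.1 hsρ τ hτ.1 htρ
      exact hbad σ hσ.1 τ hτ.1 htri ⟨hle1, hle2⟩
    exact hQ.2 FrX hrankX g2 hbad2
  · -- no pair is good on the first coordinate: bad array for `P`
    have hbad1 : BadArray FrX g1 := by
      intro σ hσ τ hτ htri hle1
      obtain ⟨ρ, hρPF, hρX, hρeq, hsρ, htρ⟩ := key σ hσ.1 τ hτ.1 hσ.2 hτ.2 htri
      refine hnone ρ hρPF hρX ?_
      intro σ' hσ' hs' τ' hτ' ht'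
      have hρne : ρ.Nonempty := hρPF.1
      have hσeq : σ' = σ := initSeg_unique_front Fr hσ' hσ.1 hs' hsρ
      have hτeq : τ' = τ := initSeg_unique_front Fr hτ' hτ.1 (ht' hρne) (htρ hρne)
      rw [hσeq, hτeq]
      exact hle1
    exact hP.2 FrX hrankX g1 hbad1
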